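/- arXiv:math/9903029 — 4 statements merged into one kernel-verified Lean document; each statement's English description precedes it below -/
import Mathlib

section
/- Let g ≥ 1 and let Q be a polynomial over ℂ of degree 2g+1 whose derivative Q' has 2g pairwise distinct roots, and such that the values of Q at these roots (the critical values of Q) are pairwise distinct. If f : ℂ → ℂ is a bijection such that f and its inverse are infinitely differentiable (as maps of ℂ regarded as a real 2-dimensional space) and Q(f(x)) = Q(x) for every x ∈ ℂ, then f is the identity map. -/
/-!
Put `h = f⁻¹`. Differentiating `Q ∘ h = Q` shows that `h` sends non-critical points of `Q` to
non-critical points; near such a point `h` is a local inverse of `Q` composed with `Q`, so `h` is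
holomorphic off the finite critical set, hence entire. Comparing `Q (h z) = Q z` at infinity gives
`h z = O(z)`, so `h` is affine by Liouville. Moreover `f` maps critical points to critical points
without changing critical values, so it fixes each of the `2g ≥ 2` critical points, and an affine
map with two fixed points is the identity.
-/

open Polynomial Filter Bornology Topology Asymptotics Set

theorem HasDerivAt.eq_zero_of_comp_eq {q h : ℂ → ℂ} {q' y : ℂ} (hq : HasDerivAt q 0 (h y))
    (hq' : HasDerivAt q q' y) (hh : DifferentiableAt ℝ h y) (hqh : ∀ z, q (h z) = q z) :
    q' = 0 := by
  have hcomp := (hq.hasFDerivAt.restrictScalars ℝ).comp y hh.hasFDerivAt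
  rw [show q ∘ h = q from funext hqh] at hcomp
  have hunique := (hq'.hasFDerivAt.restrictScalars ℝ).unique hcomp
  simpa using congrArg (fun L : ℂ →L[ℝ] ℂ => L 1) hunique

theorem HasStrictDerivAt.differentiableAt_of_comp_eq {𝕜 : Type*} [NontriviallyNormedField 𝕜]
    [CompleteSpace 𝕜] {q h : 𝕜 → 𝕜} {q' x : 𝕜} (hq : HasStrictDerivAt q q' (h x))
    (hq' : q' ≠ 0) (hqx : DifferentiableAt 𝕜 q x) (hh : ContinuousAt h x)
    (hqh : ∀ z, q (h z) = q z) : DifferentiableAt 𝕜 h x := by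
  have hinv : h =ᶠ[𝓝 x] fun z => hq.localInverse q q' (h x) hq' (q z) := by
    filter_upwards [hh.eventually (hq.eventually_left_inverse hq')] with z hz
    rw [← hqh z, hz]
  have hdiff := (HasStrictDerivAt.hasDerivAt (hq.to_localInverse hq')).differentiableAt
  rw [hqh x] at hdiff
  exact (hdiff.comp x hqx).congr_of_eventuallyEq hinv

theorem Continuous.differentiable_of_differentiableAt_off_countable {E : Type*}
    [NormedAddCommGroup E] [NormedSpace ℂ E] [CompleteSpace E] {f : ℂ → E} {s : Set ℂ}
    (hs : s.Countable) (hc : Continuous f) (hd : ∀ z ∉ s, DifferentiableAt ℂ f z) :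
    Differentiable ℂ f := fun z =>
  (Complex.hasFPowerSeriesOnBall_of_differentiable_off_countable (c := z) hs hc.continuousOn
    (fun w hw => hd w hw.2) one_pos).analyticAt.differentiableAt

theorem tendsto_cocompact_of_tendsto_cocompact_comp {X Y Z : Type*} [TopologicalSpace Y]
    [TopologicalSpace Z] {h : X → Y} {q : Y → Z} {l : Filter X} (hq : Continuous q)
    (H : Tendsto (q ∘ h) l (cocompact Z)) : Tendsto h l (cocompact Y) := by
  refine hasBasis_cocompact.tendsto_right_iff.2 fun K hK => ?_
  filter_upwards [H.eventually (hK.image hq).compl_mem_cocompact] with z hz hzK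
  exact hz ⟨_, hzK, rfl⟩

theorem Polynomial.isBigO_cobounded_of_eval_comp_eq {𝕜 : Type*} [NontriviallyNormedField 𝕜]
    [ProperSpace 𝕜] {Q : 𝕜[X]} (hQ : 0 < Q.natDegree) {h : 𝕜 → 𝕜}
    (hQh : ∀ z, Q.eval (h z) = Q.eval z) : h =O[cobounded 𝕜] id := by
  have hlc : Q.leadingCoeff ≠ 0 := leadingCoeff_ne_zero.2 (ne_zero_of_natDegree_gt hQ)
  have hQ_tendsto : Tendsto Q.eval (cobounded 𝕜) (cobounded 𝕜) :=
    tendsto_norm_atTop_iff_cobounded.1 <|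
      Q.tendsto_norm_atTop (natDegree_pos_iff_degree_pos.1 hQ) tendsto_norm_cobounded_atTop
  have hh_tendsto : Tendsto h (cobounded 𝕜) (cobounded 𝕜) := by
    rw [Metric.cobounded_eq_cocompact] at hQ_tendsto ⊢
    exact tendsto_cocompact_of_tendsto_cocompact_comp Q.continuous
      (by simpa only [Function.comp_def, hQh] using hQ_tendsto)
  have hlead := isEquivalent_cobounded_leading_monomial (P := Q)
  have hequiv : (fun z => Q.leadingCoeff * h z ^ Q.natDegree) ~[cobounded 𝕜]
      fun z => Q.leadingCoeff * z ^ Q.natDegree := by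
    refine (hlead.comp_tendsto hh_tendsto).symm.trans ?_
    simpa only [Function.comp_def, hQh] using hlead
  exact .of_pow hQ.ne' <|
    (isBigO_const_mul_left_iff hlc).1 ((isBigO_const_mul_right_iff hlc).1 hequiv.isBigO)

theorem Differentiable.exists_eq_smul_add_of_isBigO {E : Type*} [NormedAddCommGroup E]
    [NormedSpace ℂ E] [CompleteSpace E] {f : ℂ → E} (hf : Differentiable ℂ f)
    (hO : f =O[cobounded ℂ] (id : ℂ → ℂ)) : ∃ a b : E, ∀ z, f z = z • a + b := by
  have hd : Differentiable ℂ (dslope f 0) :=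
    differentiableOn_univ.1 ((Complex.differentiableOn_dslope univ_mem).2 hf.differentiableOn)
  have hbdd : IsBounded (range (dslope f 0)) := by
    rw [hd.continuous.isBounded_range_iff_isBigO, ← Metric.cobounded_eq_cocompact]
    have hslope : (fun z => z⁻¹ • (f z - f 0)) =O[cobounded ℂ] fun z : ℂ => z⁻¹ • id z :=
      (isBigO_refl (fun z : ℂ => z⁻¹) _).smul
        (hO.sub (isLittleO_const_id_cobounded _).isBigO)
    refine (hslope.congr' ?_ ?_).trans (isBigO_const_const (1 : ℂ) one_ne_zero _)
    · filter_upwards [eventually_ne_cobounded 0] with z hz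
      rw [dslope_of_ne _ hz, slope_def_module, sub_zero]
    · filter_upwards [eventually_ne_cobounded 0] with z hz
      simp [hz]
  obtain ⟨a, ha⟩ := hd.exists_const_forall_eq_of_bounded hbdd
  refine ⟨a, f 0, fun z => ?_⟩
  have hz := sub_smul_dslope f 0 z
  rw [sub_zero, ha] at hz
  rw [hz, sub_add_cancel]

theorem stmt_0_general (g : ℕ) (hg : 1 ≤ g) (Q : Polynomial ℂ)
    (hdeg : Q.natDegree = 2 * g + 1)
    (r : Fin (2 * g) → ℂ) (hr : Function.Injective r)
    (hroot : ∀ i, (Polynomial.derivative Q).eval (r i) = 0)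
    (hall : ∀ z : ℂ, (Polynomial.derivative Q).eval z = 0 → ∃ i, r i = z)
    (hcv : Function.Injective fun i => Q.eval (r i))
    (f : ℂ ≃ ℂ)
    (hf' : ContDiff ℝ (⊤ : ℕ∞) (⇑f.symm))
    (hQf : ∀ x : ℂ, Q.eval (f x) = Q.eval x) :
    ∀ x, f x = x := by
  have hQf' (z : ℂ) : Q.eval (f.symm z) = Q.eval z := by rw [← hQf, f.apply_symm_apply]
  have hcrit (z : ℂ) (hz : (derivative Q).eval (f.symm z) = 0) : (derivative Q).eval z = 0 :=
    (hz ▸ Q.hasDerivAt (f.symm z)).eq_zero_of_comp_eq (Q.hasDerivAt z)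
      (hf'.differentiable (by simp) z) hQf'
  have hfix (i : Fin (2 * g)) : f.symm (r i) = r i := by
    obtain ⟨j, hj⟩ := hall _ (hcrit (f (r i)) (by rw [f.symm_apply_apply]; exact hroot i))
    have hji : j = i := hcv (by simp only [hj, hQf])
    rw [f.symm_apply_eq, ← hj, hji]
  have hhol : Differentiable ℂ f.symm :=
    hf'.continuous.differentiable_of_differentiableAt_off_countable (countable_range r)
      fun z hz => (Q.hasStrictDerivAt _).differentiableAt_of_comp_eq
        (fun h0 => hz (hall z (hcrit z h0))) Q.differentiableAt hf'.continuous.continuousAt hQf'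
  obtain ⟨a, b, hab⟩ := hhol.exists_eq_smul_add_of_isBigO
    (Q.isBigO_cobounded_of_eval_comp_eq (by omega) hQf')
  obtain ⟨u, v, huv, hu, hv⟩ : ∃ u v, u ≠ v ∧ f.symm u = u ∧ f.symm v = v :=
    ⟨r ⟨0, by omega⟩, r ⟨1, by omega⟩, hr.ne (by simp), hfix _, hfix _⟩
  rw [hab, smul_eq_mul] at hu hv
  have ha : a = 1 := (mul_right_inj' (sub_ne_zero.2 huv)).1 (by linear_combination hu - hv)
  intro x
  rw [eq_comm, ← f.symm_apply_eq, hab, smul_eq_mul, ha]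
  linear_combination hu - u * ha

/-- If `Q` is a complex polynomial of degree `2g+1` (`g ≥ 1`) whose derivative
has `2g` pairwise distinct roots, at which the values of `Q` (the critical values) are
pairwise distinct, then any smooth diffeomorphism `f : ℂ → ℂ` (smooth with smooth inverse,
as a map of real 2-dimensional spaces) satisfying `Q ∘ f = Q` is the identity. -/
theorem stmt_0 (g : ℕ) (hg : 1 ≤ g) (Q : Polynomial ℂ)
    (hdeg : Q.natDegree = 2 * g + 1)
    (r : Fin (2 * g) → ℂ) (hr : Function.Injective r)
    (hroot : ∀ i, (Polynomial.derivative Q).eval (r i) = 0)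
    (hall : ∀ z : ℂ, (Polynomial.derivative Q).eval z = 0 → ∃ i, r i = z)
    (hcv : Function.Injective fun i => Q.eval (r i))
    (f : ℂ ≃ ℂ)
    (hf : ContDiff ℝ (⊤ : ℕ∞) (⇑f))
    (hf' : ContDiff ℝ (⊤ : ℕ∞) (⇑f.symm))
    (hQf : ∀ x : ℂ, Q.eval (f x) = Q.eval x) :
    ∀ x, f x = x :=
  stmt_0_general g hg Q hdeg r hr hroot hall hcv f hf' hQf
end

section
/- Let g ≥ 1 and let Q be a polynomial over ℂ of degree 2g+1 whose derivative Q' has 2g pairwise distinct roots, and such that the values of Q at these roots are pairwise distinct. If f(x) = p·x + q is an affine map with p ≠ 0 satisfying Q(f(x)) = Q(x) for all x ∈ ℂ, then p = 1 and q = 0, i.e. f is the identity. (Indeed, such an f must map each critical point of Q to a critical point with the same critical value, hence fixes all 2g ≥ 2 distinct critical points.) -/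
/-- If `Q` is a complex polynomial of degree `2g+1` (`g ≥ 1`) whose derivative
has `2g` pairwise distinct roots, at which the values of `Q` are pairwise distinct, and
`f(x) = p·x + q` is an affine map with `p ≠ 0` such that `Q(f(x)) = Q(x)` for all `x`,
then `p = 1` and `q = 0`, i.e. `f` is the identity. -/
theorem stmt_1 (g : ℕ) (hg : 1 ≤ g) (Q : Polynomial ℂ)
    (hdeg : Q.natDegree = 2 * g + 1)
    (r : Fin (2 * g) → ℂ) (hr : Function.Injective r)
    (hroot : ∀ i, (Polynomial.derivative Q).eval (r i) = 0)
    (hall : ∀ z : ℂ, (Polynomial.derivative Q).eval z = 0 → ∃ i, r i = z)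
    (hcv : Function.Injective fun i => Q.eval (r i))
    (p q : ℂ) (hp : p ≠ 0)
    (hQf : ∀ x : ℂ, Q.eval (p * x + q) = Q.eval x) :
    p = 1 ∧ q = 0 := by
  -- polynomial identity Q ∘ L = Q
  set L : Polynomial ℂ := Polynomial.C p * Polynomial.X + Polynomial.C q with hL
  have hcomp : Q.comp L = Q := by
    apply Polynomial.funext
    intro x
    simp [Polynomial.eval_comp, hL, hQf x]
  -- derivative identity
  have hder : ∀ x : ℂ, (Polynomial.derivative Q).eval x
      = p * (Polynomial.derivative Q).eval (p * x + q) := by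
    intro x
    conv_lhs => rw [← hcomp]
    rw [Polynomial.derivative_comp]
    simp only [hL, Polynomial.derivative_add, Polynomial.derivative_mul,
      Polynomial.derivative_C, Polynomial.derivative_X, Polynomial.eval_mul,
      Polynomial.eval_add, Polynomial.eval_comp, Polynomial.eval_C,
      Polynomial.eval_X, zero_mul, mul_one, add_zero, mul_zero, zero_add]
  -- each critical point is fixed
  have hfix : ∀ i, p * r i + q = r i := by
    intro i
    have h0 : (Polynomial.derivative Q).eval (p * r i + q) = 0 := by
      have := hder (r i)
      rw [hroot i] at this
      exact (mul_eq_zero.mp this.symm).resolve_left hp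
    obtain ⟨j, hj⟩ := hall _ h0
    have : Q.eval (r j) = Q.eval (r i) := by rw [hj, hQf]
    have hji : j = i := hcv this
    rw [← hj, hji]
  -- two distinct fixed points
  have h2 : 2 ≤ 2 * g := by omega
  set i0 : Fin (2 * g) := ⟨0, by omega⟩ with hi0
  set i1 : Fin (2 * g) := ⟨1, by omega⟩ with hi1
  have hne : r i0 ≠ r i1 := fun h => by
    have := hr h
    simp [hi0, hi1, Fin.ext_iff] at this
  have e0 := hfix i0
  have e1 := hfix i1
  have hp1 : p = 1 := by
    have h0 : (p - 1) * (r i0 - r i1) = 0 := by linear_combination e0 - e1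
    rcases mul_eq_zero.mp h0 with h | h
    · exact sub_eq_zero.mp h
    · exact absurd (sub_eq_zero.mp h) hne
  refine ⟨hp1, ?_⟩
  have := e0
  rw [hp1, one_mul] at this
  linear_combination this
end

section
/- The tree operations U_1, …, U_{N−1} and Λ are well defined (each sends a tree with N labeled edges to a tree with N labeled edges), each is a bijection of the set of isomorphism classes of trees with N labeled edges, and they satisfy the braid-cyclic relations: Λ^N = id; Λ ∘ U_k = U_{k+1} ∘ Λ for k = 1, …, N−2; U_k ∘ U_l = U_l ∘ U_k whenever |k − l| ≥ 2; and U_k ∘ U_{k+1} ∘ U_k = U_{k+1} ∘ U_k ∘ U_{k+1} for k = 1, …, N−2. -/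
open scoped Classical

/-! Trees with `N` labeled edges.

A tree with `N` labeled edges (on `N+1` vertices) is modeled as a map
`ℓ : ZMod N → Sym2 V` (for `V = Fin (N+1)`) assigning to each label an edge
(an unordered pair of vertices), which is injective, has no loop edges, and whose
edges form a tree.  Two such trees are identified when there is a label-preserving
graph isomorphism, i.e. a permutation of the vertices carrying one edge-labeling
to the other. -/

/-- The operation `Λ` on trees with labeled edges: the underlying tree is unchanged
and all edge labels are shifted cyclically by one, `i ↦ (i+1) mod N`
(so the edge labeled `i` of the new tree is the edge labeled `i-1` of the old one). -/
def treeLam {N : ℕ} {V : Type*} (ℓ : ZMod N → Sym2 V) : ZMod N → Sym2 V :=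
  fun i => ℓ (i - 1)

/-- The operation `U_k` on trees with labeled edges: if the edges labeled `k-1` and `k`
have no common vertex, the two labels are exchanged; if the edge labeled `k-1` joins
`A` and `B` and the edge labeled `k` joins `A` and `C`, then the edge `AB` receives
label `k`, the edge `AC` is deleted, and a new edge `BC` labeled `k-1` is added. -/
noncomputable def treeU {N : ℕ} {V : Type*}
    (k : ZMod N) (ℓ : ZMod N → Sym2 V) : ZMod N → Sym2 V :=
  if h : ∃ a, a ∈ ℓ (k - 1) ∧ a ∈ ℓ k then
    -- the common vertex is `A := h.choose`; `B`, `C` are the other endpoints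
    fun i =>
      if i = k - 1 then
        Sym2.mk (Sym2.Mem.other h.choose_spec.1) (Sym2.Mem.other h.choose_spec.2)
      else if i = k then ℓ (k - 1)
      else ℓ i
  else
    fun i =>
      if i = k - 1 then ℓ k
      else if i = k then ℓ (k - 1)
      else ℓ i

/-- Two edge-labelings are equivalent iff some label-preserving graph isomorphism
(a permutation of the vertices) carries one to the other. -/
def treeEquiv {N : ℕ} {V : Type*} (ℓ ℓ' : ZMod N → Sym2 V) : Prop :=
  ∃ σ : Equiv.Perm V, ∀ i, ℓ' i = Sym2.map σ (ℓ i)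

/-- `ℓ` is a tree with `N` labeled edges: the `N` assigned edges are distinct non-loops
and form a (connected, acyclic) tree on the `N+1` vertices. -/
def IsLTree {N : ℕ} (ℓ : ZMod N → Sym2 (Fin (N + 1))) : Prop :=
  Function.Injective ℓ ∧ (∀ i, ¬ (ℓ i).IsDiag) ∧
    (SimpleGraph.fromEdgeSet (Set.range ℓ)).IsTree

/-!
Read an edge `{a, b}` as the transposition `(a b)`. Then `U_k` is the Hurwitz move
`(x_{k-1}, x_k) ↦ (x_{k-1} x_k x_{k-1}⁻¹, x_{k-1})` on the sequence of transpositions: if the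
two edges share the vertex `a`, conjugating `(a c)` by `(a b)` gives `(b c)`, and disjoint
transpositions commute. A non-loop edge is determined by its transposition, so `U_k` inherits
injectivity from the Hurwitz move and the braid relation from the self-distributivity of
conjugation. `U_k` keeps a tree a tree because it trades the edge `ac` for `bc` while keeping
`ab`: the result is still connected and has `N` edges. Being injective on the finite set of
trees, `U_k` is onto it; the remaining relations only move labels around.
-/

open Function

section LabelMove
variable {ι α : Type*} [AddGroupWithOne ι] [DecidableEq ι]

def hurwitzMove (op : α → α → α) (k : ι) (x : ι → α) : ι → α :=
  update (update x k (x (k - 1))) (k - 1) (op (x (k - 1)) (x k))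

lemma hurwitzMove_eq_update_comp_swap (op : α → α → α) (k : ι) (x : ι → α) :
    hurwitzMove op k x = update x k (op (x (k - 1)) (x k)) ∘ Equiv.swap (k - 1) k := by
  ext i
  rcases eq_or_ne i (k - 1) with rfl | h1
  · simp [hurwitzMove]
  rcases eq_or_ne i k with rfl | h2
  · simp [hurwitzMove, h1, h1.symm, Equiv.swap_apply_right]
  · simp [hurwitzMove, h1, h2, Equiv.swap_apply_of_ne_of_ne]

lemma hurwitzMove_comm (op : α → α → α) {k l : ι} (hkl : k ≠ l) (hk : k - 1 ≠ l)
    (hl : k ≠ l - 1) (x : ι → α) :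
    hurwitzMove op k (hurwitzMove op l x) = hurwitzMove op l (hurwitzMove op k x) := by
  have hkl' : k - 1 ≠ l - 1 := fun h => hkl (sub_left_injective h)
  ext i
  simp only [hurwitzMove, update_apply]
  split_ifs <;> grind

lemma hurwitzMove_shift (op : α → α → α) (k : ι) (x : ι → α) :
    hurwitzMove op (k + 1) (fun i => x (i - 1)) = fun i => hurwitzMove op k x (i - 1) := by
  ext i
  simp only [hurwitzMove, update_apply, add_sub_cancel_right, sub_eq_iff_eq_add, sub_add_cancel]

lemma comp_hurwitzMove {β : Type*} (op : α → α → α) (op' : β → β → β) (f : α → β) (k : ι)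
    (x : ι → α) (h : f (op (x (k - 1)) (x k)) = op' (f (x (k - 1))) (f (x k))) :
    f ∘ hurwitzMove op k x = hurwitzMove op' k (f ∘ x) := by
  simp only [hurwitzMove, comp_update, comp_apply, h]

lemma hurwitzMove_braid (op : α → α → α) (hop : ∀ a b c, op a (op b c) = op (op a b) (op a c))
    {k : ι} (h₁ : k - 1 ≠ k) (h₂ : k - 1 ≠ k + 1) (x : ι → α) :
    hurwitzMove op k (hurwitzMove op (k + 1) (hurwitzMove op k x)) =
      hurwitzMove op (k + 1) (hurwitzMove op k (hurwitzMove op (k + 1) x)) := by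
  have h₃ : k ≠ k + 1 := fun h => h₁ (by rw [sub_eq_iff_eq_add, ← h])
  ext i
  simp only [hurwitzMove, update_apply, add_sub_cancel_right]
  split_ifs <;> grind

lemma hurwitzMove_injective (op : α → α → α) (hop : ∀ a, Injective (op a)) {k : ι}
    (hk : k - 1 ≠ k) : Injective (hurwitzMove op k) := by
  intro x y h
  have h₁ : x (k - 1) = y (k - 1) := by
    simpa [hurwitzMove, hk.symm] using congrFun h k
  have h₂ : x k = y k := hop _ (by simpa [hurwitzMove, h₁] using congrFun h (k - 1))
  ext i
  rcases eq_or_ne i (k - 1) with rfl | h1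
  · exact h₁
  rcases eq_or_ne i k with rfl | h2
  · exact h₂
  · simpa [hurwitzMove, h1, h2] using congrFun h i

end LabelMove

section Transposition
variable {V : Type*} [DecidableEq V]

def transposition : Sym2 V → Equiv.Perm V :=
  Sym2.lift ⟨Equiv.swap, Equiv.swap_comm⟩

@[simp]
lemma transposition_mk (a b : V) : transposition s(a, b) = Equiv.swap a b := rfl

lemma transposition_map (σ : Equiv.Perm V) (e : Sym2 V) :
    transposition (e.map σ) = σ * transposition e * σ⁻¹ := by
  induction e using Sym2.ind with
  | _ a b => simp [Equiv.swap_apply_apply]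

lemma eq_of_transposition_eq {e e' : Sym2 V} (he : ¬ e.IsDiag)
    (h : transposition e = transposition e') : e = e' := by
  induction e using Sym2.ind with | _ a b => ?_
  induction e' using Sym2.ind with | _ c d => ?_
  have hab : a ≠ b := by simpa using he
  have h' : Equiv.swap a b = Equiv.swap c d := h
  have moved : ∀ x, x = a ∨ x = b → x = c ∨ x = d := fun x hx =>
    (Equiv.swap_apply_ne_self_iff.mp (h' ▸ Equiv.swap_apply_ne_self_iff.mpr ⟨hab, hx⟩)).2
  exact Sym2.eq_of_ne_mem hab (Sym2.mem_mk_left a b) (Sym2.mem_mk_right a b)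
    (Sym2.mem_iff.mpr (moved a (.inl rfl))) (Sym2.mem_iff.mpr (moved b (.inr rfl)))

end Transposition

section MoveEdge
variable {V : Type*}

noncomputable def moveEdge (e f : Sym2 V) : Sym2 V :=
  if h : ∃ a, a ∈ e ∧ a ∈ f then
    s(Sym2.Mem.other h.choose_spec.1, Sym2.Mem.other h.choose_spec.2)
  else f

lemma moveEdge_cases (e f : Sym2 V) :
    (∃ a b c, e = s(a, b) ∧ f = s(a, c) ∧ moveEdge e f = s(b, c)) ∨
      ((∀ a ∈ e, a ∉ f) ∧ moveEdge e f = f) := by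
  unfold moveEdge
  split_ifs with h
  · exact .inl ⟨_, _, _, (Sym2.other_spec _).symm, (Sym2.other_spec _).symm, rfl⟩
  · exact .inr ⟨fun a ha ha' => h ⟨a, ha, ha'⟩, rfl⟩

lemma treeU_eq_hurwitzMove {N : ℕ} (k : ZMod N) (ℓ : ZMod N → Sym2 V) :
    treeU k ℓ = hurwitzMove moveEdge k ℓ := by
  ext1 i
  unfold treeU hurwitzMove moveEdge
  split_ifs <;> simp_all [update_apply]

variable [DecidableEq V]

lemma moveEdge_eq_map {e f : Sym2 V} (hf : ¬ f.IsDiag) (hne : e ≠ f) :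
    moveEdge e f = f.map (transposition e) := by
  rcases moveEdge_cases e f with ⟨a, b, c, rfl, rfl, h⟩ | ⟨hdisj, h⟩
  · have hca : c ≠ a := fun h => hf (by simp [h])
    have hcb : c ≠ b := fun h => hne (by rw [h])
    simp [h, Equiv.swap_apply_of_ne_of_ne hca hcb]
  · induction e using Sym2.ind with | _ a b => ?_
    induction f using Sym2.ind with | _ c d => ?_
    have hc : c ≠ a ∧ c ≠ b := by
      refine ⟨fun h => hdisj a ?_ ?_, fun h => hdisj b ?_ ?_⟩ <;> simp [h]
    have hd : d ≠ a ∧ d ≠ b := by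
      refine ⟨fun h => hdisj a ?_ ?_, fun h => hdisj b ?_ ?_⟩ <;> simp [h]
    simp [h, Equiv.swap_apply_of_ne_of_ne hc.1 hc.2, Equiv.swap_apply_of_ne_of_ne hd.1 hd.2]

lemma transposition_moveEdge {e f : Sym2 V} (hf : ¬ f.IsDiag) (hne : e ≠ f) :
    transposition (moveEdge e f) = transposition e * transposition f * (transposition e)⁻¹ := by
  rw [moveEdge_eq_map hf hne, transposition_map]

lemma moveEdge_map (σ : Equiv.Perm V) {e f : Sym2 V} (hf : ¬ f.IsDiag) (hne : e ≠ f) :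
    moveEdge (e.map σ) (f.map σ) = (moveEdge e f).map σ := by
  rw [moveEdge_eq_map ((Sym2.isDiag_map σ.injective).not.mpr hf)
      ((Sym2.map.injective σ.injective).ne hne), moveEdge_eq_map hf hne, transposition_map,
    Sym2.map_map, Sym2.map_map]
  congr 1
  ext x
  simp

end MoveEdge

section Operations
variable {N : ℕ} {V : Type*}

lemma treeLam_iterate (n : ℕ) (ℓ : ZMod N → Sym2 V) :
    treeLam^[n] ℓ = fun i => ℓ (i - n) := by
  induction n with
  | zero => simp
  | succ n ih =>
    rw [iterate_succ_apply', ih]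
    ext1 i
    simp only [treeLam, Nat.cast_succ, sub_sub, add_comm]

lemma treeLam_iterate_self (ℓ : ZMod N → Sym2 V) : treeLam^[N] ℓ = ℓ := by
  simp [treeLam_iterate]

lemma treeLam_treeU (k : ZMod N) (ℓ : ZMod N → Sym2 V) :
    treeLam (treeU k ℓ) = treeU (k + 1) (treeLam ℓ) := by
  simp only [treeU_eq_hurwitzMove]
  exact (hurwitzMove_shift _ _ _).symm

lemma treeU_comm {k l : ZMod N} (hkl : k ≠ l) (hk : k - 1 ≠ l) (hl : k ≠ l - 1)
    (ℓ : ZMod N → Sym2 V) : treeU k (treeU l ℓ) = treeU l (treeU k ℓ) := by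
  simp only [treeU_eq_hurwitzMove, hurwitzMove_comm _ hkl hk hl]

variable [DecidableEq V] {k : ZMod N} {ℓ : ZMod N → Sym2 V}

lemma treeU_map (σ : Equiv.Perm V) (hk : ¬ (ℓ k).IsDiag) (hne : ℓ (k - 1) ≠ ℓ k) :
    treeU k (Sym2.map σ ∘ ℓ) = Sym2.map σ ∘ treeU k ℓ := by
  rw [treeU_eq_hurwitzMove, treeU_eq_hurwitzMove,
    comp_hurwitzMove _ _ _ _ _ (moveEdge_map σ hk hne).symm]

lemma transposition_comp_treeU (hk : ¬ (ℓ k).IsDiag) (hne : ℓ (k - 1) ≠ ℓ k) :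
    transposition ∘ treeU k ℓ = hurwitzMove (fun a b => a * b * a⁻¹) k (transposition ∘ ℓ) := by
  rw [treeU_eq_hurwitzMove]
  exact comp_hurwitzMove _ _ _ _ _ (transposition_moveEdge hk hne)

end Operations

section TreeEquiv
variable {N : ℕ} {V : Type*} {ℓ ℓ' : ZMod N → Sym2 V}

lemma treeEquiv_refl (ℓ : ZMod N → Sym2 V) : treeEquiv ℓ ℓ :=
  ⟨1, fun i => by simp⟩

lemma treeEquiv_of_eq (h : ℓ = ℓ') : treeEquiv ℓ ℓ' :=
  h ▸ treeEquiv_refl ℓ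

lemma treeEquiv_treeLam (h : treeEquiv ℓ ℓ') : treeEquiv (treeLam ℓ) (treeLam ℓ') :=
  let ⟨σ, hσ⟩ := h
  ⟨σ, fun i => hσ (i - 1)⟩

lemma treeEquiv_of_treeEquiv_treeLam (h : treeEquiv (treeLam ℓ) (treeLam ℓ')) : treeEquiv ℓ ℓ' :=
  let ⟨σ, hσ⟩ := h
  ⟨σ, fun i => by simpa [treeLam] using hσ (i + 1)⟩

lemma treeLam_comp_addRight (ℓ : ZMod N → Sym2 V) : treeLam (ℓ ∘ Equiv.addRight 1) = ℓ := by
  ext1 i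
  simp [treeLam]

lemma treeEquiv_treeU [DecidableEq V] {k : ZMod N} (h : treeEquiv ℓ ℓ')
    (hk : ¬ (ℓ k).IsDiag) (hne : ℓ (k - 1) ≠ ℓ k) : treeEquiv (treeU k ℓ) (treeU k ℓ') := by
  obtain ⟨σ, hσ⟩ := h
  refine ⟨σ, congrFun ?_⟩
  rw [show ℓ' = Sym2.map σ ∘ ℓ from funext hσ, treeU_map σ hk hne]
  rfl

end TreeEquiv

namespace SimpleGraph
variable {V : Type*} {G H : SimpleGraph V}

lemma Connected.of_adj_reachable (hG : G.Connected) (h : ∀ u v, G.Adj u v → H.Reachable u v) :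
    H.Connected := by
  have := hG.nonempty
  refine ⟨fun u v => (reachable_iff_reflTransGen u v).mpr ?_⟩
  exact ((reachable_iff_reflTransGen u v).mp (hG u v)).lift' id
    fun a b hab => (reachable_iff_reflTransGen a b).mp (h a b hab)

lemma IsAcyclic.not_adj_of_adj_of_adj (hG : G.IsAcyclic) {a b c : V} (hab : G.Adj a b)
    (hac : G.Adj a c) : ¬ G.Adj b c := fun hbc =>
  hG.dist_ne_of_adj hbc hab.reachable
    (by rw [dist_eq_one_iff_adj.mpr hab, dist_eq_one_iff_adj.mpr hac])

end SimpleGraph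

lemma Function.Injective.update_of_notMem_range {α β : Type*} [DecidableEq α] {f : α → β}
    (hf : Injective f) (a : α) {v : β} (hv : v ∉ Set.range f) : Injective (update f a v) := by
  intro x y h
  by_cases hx : x = a <;> by_cases hy : y = a
  · rw [hx, hy]
  · subst hx; rw [update_self, update_of_ne hy] at h; exact absurd ⟨y, h.symm⟩ hv
  · subst hy; rw [update_self, update_of_ne hx] at h; exact absurd ⟨x, h⟩ hv
  · rw [update_of_ne hx, update_of_ne hy] at h; exact hf h

section LTree
variable {N : ℕ} {k : ZMod N} {ℓ ℓ' : ZMod N → Sym2 (Fin (N + 1))}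

lemma IsLTree.comp_perm (hL : IsLTree ℓ) (π : Equiv.Perm (ZMod N)) : IsLTree (ℓ ∘ π) :=
  ⟨hL.1.comp π.injective, fun i => hL.2.1 (π i), by
    rw [Set.range_comp, Equiv.range_eq_univ, Set.image_univ]; exact hL.2.2⟩

lemma isLTree_treeLam (hL : IsLTree ℓ) : IsLTree (treeLam ℓ) :=
  hL.comp_perm (Equiv.subRight 1)

lemma IsLTree.transposition_comp_treeU (hL : IsLTree ℓ) (hk : k - 1 ≠ k) :
    transposition ∘ treeU k ℓ =
      hurwitzMove (fun a b => a * b * a⁻¹) k (transposition ∘ ℓ) :=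
  _root_.transposition_comp_treeU (hL.2.1 k) (hL.1.ne hk)

lemma IsLTree.eq_of_transposition_comp_eq (hL : IsLTree ℓ)
    (h : transposition ∘ ℓ = transposition ∘ ℓ') : ℓ = ℓ' :=
  funext fun i => eq_of_transposition_eq (hL.2.1 i) (congrFun h i)

lemma IsLTree.eq_of_treeU_eq (hL : IsLTree ℓ) (hL' : IsLTree ℓ') (hk : k - 1 ≠ k)
    (h : treeU k ℓ = treeU k ℓ') : ℓ = ℓ' := by
  refine hL.eq_of_transposition_comp_eq
    (hurwitzMove_injective (fun a b => a * b * a⁻¹) (fun a => ?_) hk ?_)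
  · exact (mul_left_injective a⁻¹).comp (mul_right_injective a)
  · rw [← hL.transposition_comp_treeU hk, ← hL'.transposition_comp_treeU hk, h]

end LTree

section FiniteLTree
open SimpleGraph
variable {N : ℕ} [NeZero N] {k : ZMod N} {ℓ ℓ' : ZMod N → Sym2 (Fin (N + 1))}

lemma isLTree_iff_connected : IsLTree ℓ ↔
    Injective ℓ ∧ (∀ i, ¬ (ℓ i).IsDiag) ∧ (fromEdgeSet (Set.range ℓ)).Connected := by
  refine and_congr_right fun hinj => and_congr_right fun hnd => ?_
  have hedges : (fromEdgeSet (Set.range ℓ)).edgeSet = Set.range ℓ := by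
    rw [edgeSet_fromEdgeSet, sdiff_eq_left, Set.disjoint_left]
    rintro _ ⟨i, rfl⟩
    exact hnd i
  rw [isTree_iff_connected_and_card, hedges, Nat.card_range_of_injective hinj]
  simp

lemma IsLTree.update_edge (hL : IsLTree ℓ) {i j : ZMod N} {a b c : Fin (N + 1)}
    (hi : ℓ i = s(a, b)) (hj : ℓ j = s(a, c)) (hbc : b ≠ c) :
    IsLTree (update ℓ j s(b, c)) := by
  have hacyc := hL.2.2.isAcyclic
  rw [isLTree_iff_connected] at hL ⊢
  obtain ⟨hinj, hnd, hconn⟩ := hL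
  have hij : i ≠ j := fun h => hbc (Sym2.congr_right.mp (hi.symm.trans (h ▸ hj)))
  have hab : a ≠ b := fun h => hnd i (by simp [hi, h])
  have hac : a ≠ c := fun h => hnd j (by simp [hj, h])
  have adj : ∀ {ℓ : ZMod N → Sym2 (Fin (N + 1))} {m u v}, ℓ m = s(u, v) → u ≠ v →
      (fromEdgeSet (Set.range ℓ)).Adj u v :=
    fun hm huv => (fromEdgeSet_adj _).mpr ⟨⟨_, hm⟩, huv⟩
  have hnew : s(b, c) ∉ Set.range ℓ := fun ⟨m, hm⟩ =>
    hacyc.not_adj_of_adj_of_adj (adj hi hab) (adj hj hac) (adj hm hbc)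
  refine ⟨hinj.update_of_notMem_range j hnew, fun m => ?_, hconn.of_adj_reachable ?_⟩
  · rcases eq_or_ne m j with rfl | hm
    · simpa using hbc
    · simpa [hm] using hnd m
  · rintro u v huv
    obtain ⟨⟨m, hm⟩, huv⟩ := (fromEdgeSet_adj _).mp huv
    rcases eq_or_ne m j with rfl | hmj
    · have hab' := adj (ℓ := update ℓ m s(b, c)) (m := i) (by simp [hij, hi]) hab
      have hbc' := adj (ℓ := update ℓ m s(b, c)) (m := m) (by simp) hbc
      rcases Sym2.eq_iff.mp (hm.symm.trans hj) with ⟨rfl, rfl⟩ | ⟨rfl, rfl⟩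
      · exact hab'.reachable.trans hbc'.reachable
      · exact (hab'.reachable.trans hbc'.reachable).symm
    · exact (adj (m := m) (by simp [hmj, hm]) huv).reachable

lemma IsLTree.map_perm (hL : IsLTree ℓ) (σ : Equiv.Perm (Fin (N + 1))) :
    IsLTree (Sym2.map σ ∘ ℓ) := by
  rw [isLTree_iff_connected] at hL ⊢
  obtain ⟨hinj, hnd, hconn⟩ := hL
  refine ⟨(Sym2.map.injective σ.injective).comp hinj,
    fun i => (Sym2.isDiag_map σ.injective).not.mpr (hnd i), hconn.map ⟨σ, ?_⟩ σ.surjective⟩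
  intro u v huv
  obtain ⟨⟨i, hi⟩, huv⟩ := (fromEdgeSet_adj _).mp huv
  exact (fromEdgeSet_adj _).mpr ⟨⟨i, by simp [hi]⟩, σ.injective.ne huv⟩

lemma isLTree_treeU (hL : IsLTree ℓ) (hk : k - 1 ≠ k) : IsLTree (treeU k ℓ) := by
  rw [treeU_eq_hurwitzMove, hurwitzMove_eq_update_comp_swap]
  refine IsLTree.comp_perm ?_ _
  rcases moveEdge_cases (ℓ (k - 1)) (ℓ k) with ⟨a, b, c, hb, hc, h⟩ | ⟨-, h⟩
  · rw [h]
    exact hL.update_edge hb hc fun hbc => hk (hL.1 (by rw [hb, hc, hbc]))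
  · rwa [h, update_eq_self]

lemma IsLTree.exists_treeU_eq (hm : IsLTree ℓ) (hk : k - 1 ≠ k) :
    ∃ ℓ₀, IsLTree ℓ₀ ∧ treeU k ℓ₀ = ℓ := by
  let f (m : {m : ZMod N → Sym2 (Fin (N + 1)) // IsLTree m}) : {m // IsLTree m} :=
    ⟨treeU k m, isLTree_treeU m.2 hk⟩
  have hf : Injective f := fun ℓ₁ ℓ₂ h =>
    Subtype.ext (ℓ₁.2.eq_of_treeU_eq ℓ₂.2 hk (congrArg Subtype.val h))
  obtain ⟨ℓ₀, h⟩ := Finite.surjective_of_injective hf ⟨ℓ, hm⟩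
  exact ⟨ℓ₀, ℓ₀.2, congrArg Subtype.val h⟩

lemma treeEquiv_of_treeEquiv_treeU (hL : IsLTree ℓ) (hL' : IsLTree ℓ') (hk : k - 1 ≠ k)
    (h : treeEquiv (treeU k ℓ) (treeU k ℓ')) : treeEquiv ℓ ℓ' := by
  obtain ⟨σ, hσ⟩ := h
  exact ⟨σ, congrFun (hL'.eq_of_treeU_eq (hL.map_perm σ) hk
    ((funext hσ).trans (treeU_map σ (hL.2.1 k) (hL.1.ne hk)).symm))⟩

lemma IsLTree.treeU_braid (hL : IsLTree ℓ) (h₁ : k - 1 ≠ k) (h₂ : k - 1 ≠ k + 1) :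
    treeU k (treeU (k + 1) (treeU k ℓ)) =
      treeU (k + 1) (treeU k (treeU (k + 1) ℓ)) := by
  have h₃ : k + 1 - 1 ≠ k + 1 := by simpa using h₁
  have L₁ := isLTree_treeU hL h₁
  have L₂ := isLTree_treeU L₁ h₃
  have R₁ := isLTree_treeU hL h₃
  have R₂ := isLTree_treeU R₁ h₁
  refine (isLTree_treeU L₂ h₁).eq_of_transposition_comp_eq ?_
  rw [L₂.transposition_comp_treeU h₁, L₁.transposition_comp_treeU h₃,
    hL.transposition_comp_treeU h₁, R₂.transposition_comp_treeU h₃,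
    R₁.transposition_comp_treeU h₁, hL.transposition_comp_treeU h₃]
  exact hurwitzMove_braid _ (fun a b c => by group) h₁ h₂ _

end FiniteLTree

lemma ZMod.intCast_ne_intCast_of_natAbs_sub_lt {N : ℕ} {a b : ℤ} (hab : a ≠ b)
    (h : (a - b).natAbs < N) : (a : ZMod N) ≠ b := by
  rw [Ne, ZMod.intCast_eq_intCast_iff_dvd_sub]
  intro hdvd
  have := Int.eq_zero_of_dvd_of_natAbs_lt_natAbs hdvd (by rw [← Int.natAbs_neg]; simpa using h)
  omega

/-- the tree operations `U_1, …, U_{N-1}` and `Λ` are well defined (each sends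
a tree with `N` labeled edges to a tree with `N` labeled edges), each is a bijection of the
set of isomorphism classes of trees with `N` labeled edges (it respects isomorphism and is
injective and surjective on classes), and they satisfy the braid-cyclic relations:
`Λ^N = id`, `Λ ∘ U_k = U_{k+1} ∘ Λ` for `k = 1, …, N-2`, `U_k ∘ U_l = U_l ∘ U_k` whenever
`|k - l| ≥ 2`, and `U_k ∘ U_{k+1} ∘ U_k = U_{k+1} ∘ U_k ∘ U_{k+1}` for `k = 1, …, N-2`
(all as operations on isomorphism classes). -/
theorem stmt_4 (N : ℕ) (hN : 1 ≤ N) :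
    -- well-definedness
    (∀ ℓ : ZMod N → Sym2 (Fin (N + 1)), IsLTree ℓ → IsLTree (treeLam ℓ)) ∧
    (∀ k : ℕ, 1 ≤ k → k ≤ N - 1 →
      ∀ ℓ : ZMod N → Sym2 (Fin (N + 1)), IsLTree ℓ → IsLTree (treeU (k : ZMod N) ℓ)) ∧
    -- the operations descend to isomorphism classes
    (∀ ℓ ℓ' : ZMod N → Sym2 (Fin (N + 1)), IsLTree ℓ → IsLTree ℓ' → treeEquiv ℓ ℓ' →
      treeEquiv (treeLam ℓ) (treeLam ℓ')) ∧
    (∀ k : ℕ, 1 ≤ k → k ≤ N - 1 →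
      ∀ ℓ ℓ' : ZMod N → Sym2 (Fin (N + 1)), IsLTree ℓ → IsLTree ℓ' → treeEquiv ℓ ℓ' →
      treeEquiv (treeU (k : ZMod N) ℓ) (treeU (k : ZMod N) ℓ')) ∧
    -- bijectivity on isomorphism classes: injectivity and surjectivity
    (∀ ℓ ℓ' : ZMod N → Sym2 (Fin (N + 1)), IsLTree ℓ → IsLTree ℓ' →
      treeEquiv (treeLam ℓ) (treeLam ℓ') → treeEquiv ℓ ℓ') ∧
    (∀ m : ZMod N → Sym2 (Fin (N + 1)), IsLTree m →
      ∃ ℓ : ZMod N → Sym2 (Fin (N + 1)), IsLTree ℓ ∧ treeEquiv (treeLam ℓ) m) ∧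
    (∀ k : ℕ, 1 ≤ k → k ≤ N - 1 →
      ∀ ℓ ℓ' : ZMod N → Sym2 (Fin (N + 1)), IsLTree ℓ → IsLTree ℓ' →
      treeEquiv (treeU (k : ZMod N) ℓ) (treeU (k : ZMod N) ℓ') → treeEquiv ℓ ℓ') ∧
    (∀ k : ℕ, 1 ≤ k → k ≤ N - 1 →
      ∀ m : ZMod N → Sym2 (Fin (N + 1)), IsLTree m →
      ∃ ℓ : ZMod N → Sym2 (Fin (N + 1)), IsLTree ℓ ∧ treeEquiv (treeU (k : ZMod N) ℓ) m) ∧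
    -- braid-cyclic relations (as operations on isomorphism classes)
    (∀ ℓ : ZMod N → Sym2 (Fin (N + 1)), IsLTree ℓ →
      treeEquiv ((treeLam (N := N) (V := Fin (N + 1)))^[N] ℓ) ℓ) ∧
    (∀ k : ℕ, 1 ≤ k → k ≤ N - 2 → ∀ ℓ : ZMod N → Sym2 (Fin (N + 1)), IsLTree ℓ →
      treeEquiv (treeLam (treeU (k : ZMod N) ℓ))
        (treeU ((k + 1 : ℕ) : ZMod N) (treeLam ℓ))) ∧
    (∀ k l : ℕ, 1 ≤ k → k ≤ N - 1 → 1 ≤ l → l ≤ N - 1 → 2 ≤ ((k : ℤ) - l).natAbs →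
      ∀ ℓ : ZMod N → Sym2 (Fin (N + 1)), IsLTree ℓ →
      treeEquiv (treeU (k : ZMod N) (treeU (l : ZMod N) ℓ))
        (treeU (l : ZMod N) (treeU (k : ZMod N) ℓ))) ∧
    (∀ k : ℕ, 1 ≤ k → k ≤ N - 2 → ∀ ℓ : ZMod N → Sym2 (Fin (N + 1)), IsLTree ℓ →
      treeEquiv (treeU (k : ZMod N) (treeU ((k + 1 : ℕ) : ZMod N) (treeU (k : ZMod N) ℓ)))
        (treeU ((k + 1 : ℕ) : ZMod N) (treeU (k : ZMod N) (treeU ((k + 1 : ℕ) : ZMod N) ℓ)))) := by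
  have : NeZero N := ⟨by omega⟩
  have cast_ne : ∀ a b : ℤ, a ≠ b → (a - b).natAbs < N → (a : ZMod N) ≠ b := fun a b =>
    ZMod.intCast_ne_intCast_of_natAbs_sub_lt
  have hk : ∀ k : ℕ, 1 ≤ k → k ≤ N - 1 → (k : ZMod N) - 1 ≠ k := fun k _ _ => by
    exact_mod_cast cast_ne (k - 1) k (by omega) (by omega)
  refine ⟨fun ℓ hL => isLTree_treeLam hL, fun k h₁ h₂ ℓ hL => isLTree_treeU hL (hk k h₁ h₂),
    fun ℓ ℓ' _ _ h => treeEquiv_treeLam h,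
    fun k h₁ h₂ ℓ ℓ' hL _ h => treeEquiv_treeU h (hL.2.1 _) (hL.1.ne (hk k h₁ h₂)),
    fun ℓ ℓ' _ _ h => treeEquiv_of_treeEquiv_treeLam h,
    fun m hm => ⟨_, hm.comp_perm (Equiv.addRight 1), treeEquiv_of_eq (treeLam_comp_addRight m)⟩,
    fun k h₁ h₂ ℓ ℓ' hL hL' h => treeEquiv_of_treeEquiv_treeU hL hL' (hk k h₁ h₂) h,
    fun k h₁ h₂ m hm => ?_, fun ℓ _ => treeEquiv_of_eq (treeLam_iterate_self ℓ),
    fun k _ _ ℓ _ => treeEquiv_of_eq (by rw [Nat.cast_succ, treeLam_treeU]),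
    fun k l h₁ _ h₃ _ hkl ℓ _ => treeEquiv_of_eq (treeU_comm ?_ ?_ ?_ ℓ),
    fun k h₁ h₂ ℓ hL => treeEquiv_of_eq ?_⟩
  · obtain ⟨ℓ, hL, rfl⟩ := hm.exists_treeU_eq (hk k h₁ h₂)
    exact ⟨ℓ, hL, treeEquiv_refl _⟩
  · exact_mod_cast cast_ne k l (by omega) (by omega)
  · exact_mod_cast cast_ne (k - 1) l (by omega) (by omega)
  · exact_mod_cast cast_ne k (l - 1) (by omega) (by omega)
  · rw [Nat.cast_succ]
    exact hL.treeU_braid (hk k h₁ (by omega))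
      (by exact_mod_cast cast_ne (k - 1) (k + 1) (by omega) (by omega))
end

section
/- The braid-cyclic group preserves tree-like subgroups of the free group: if H is a tree-like subgroup of F_N and φ is any element of BC_N (in particular φ = λ or φ = u_k^{±1}), then the image φ(H) is again a tree-like subgroup of F_N. -/
/-- The endomorphism `λ` of the free group `F_N` on generators indexed by `ZMod N`,
sending `s_k` to `s_{(k+1) mod N}`. -/
noncomputable def lamHom (N : ℕ) : FreeGroup (ZMod N) →* FreeGroup (ZMod N) :=
  FreeGroup.lift fun k => FreeGroup.of (k + 1)

/-- The endomorphism `u_k` of the free group `F_N`, sending `s_{k-1} ↦ s_k`,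
`s_k ↦ s_k⁻¹ s_{k-1} s_k`, and `s_l ↦ s_l` for `l ∉ {k-1, k}` (indices mod `N`). -/
noncomputable def uHom (N : ℕ) (k : ℕ) : FreeGroup (ZMod N) →* FreeGroup (ZMod N) :=
  FreeGroup.lift fun l =>
    if l = (k : ZMod N) - 1 then FreeGroup.of (k : ZMod N)
    else if l = (k : ZMod N) then
      (FreeGroup.of (k : ZMod N))⁻¹ * FreeGroup.of ((k : ZMod N) - 1) *
        FreeGroup.of (k : ZMod N)
    else FreeGroup.of l

/-- The permutation of the right coset space `H\G` induced by right multiplication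
by `g`. -/
def rightMulMap {G : Type*} [Group G] (H : Subgroup G) (g : G) :
    Quotient (QuotientGroup.rightRel H) → Quotient (QuotientGroup.rightRel H) :=
  Quotient.map' (fun x => x * g) (by
    intro a b hab
    rw [QuotientGroup.rightRel_apply] at hab ⊢
    simpa [mul_assoc] using hab)

/-- `f` is a transposition: it exchanges two distinct points and fixes all others. -/
def IsTransposition {X : Type*} (f : X → X) : Prop :=
  ∃ x y : X, x ≠ y ∧ f x = y ∧ f y = x ∧ ∀ z : X, z ≠ x → z ≠ y → f z = z

/-- `H` is a tree-like subgroup of the free group `F_N`: it has index `N+1`, and the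
permutations `σ_k` of the right coset space `H\F_N` induced by right multiplication by
the generators `s_k` are transpositions, pairwise distinct (so that the `N` transpositions
form the edge set of a spanning tree on the `N+1` cosets). -/
def IsTreeLike (N : ℕ) (H : Subgroup (FreeGroup (ZMod N))) : Prop :=
  H.index = N + 1 ∧
  (∀ k : ZMod N, IsTransposition (rightMulMap H (FreeGroup.of k))) ∧
  ∀ k l : ZMod N, k ≠ l →
    rightMulMap H (FreeGroup.of k) ≠ rightMulMap H (FreeGroup.of l)

/-! The generators `λ^{±1}` and `u_k^{±1}` of `BC_N` send every `s_k` to a conjugate of some `s_j`,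
hence so does every element of `BC_N`. If `φ⁻¹(s_k)` is conjugate to `s_j`, then `s_k` acts on
`φ(H)\F_N` as `s_j` acts on `H\F_N`, up to a bijection of coset spaces; so the `σ_k` of `φ(H)`
are transpositions, and the index is unchanged. Distinctness is then automatic: since `F_N` acts
transitively on the `N + 1` cosets, the edges of the `σ_k` form a connected graph, which needs
at least `N` edges. -/

namespace IsTransposition

variable {X Y : Type*} {f : X → X}

theorem semiconj {f' : Y → Y} (e : X ≃ Y) (h : Function.Semiconj e f f')
    (hf : IsTransposition f) : IsTransposition f' := by
  obtain ⟨x, y, hxy, hfx, hfy, hfix⟩ := hf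
  refine ⟨e x, e y, e.injective.ne hxy, by rw [← h, hfx], by rw [← h, hfy], fun z hzx hzy => ?_⟩
  rw [← e.apply_symm_apply z, ← h, hfix]
  · exact fun hz => hzx (by rw [← hz, e.apply_symm_apply])
  · exact fun hz => hzy (by rw [← hz, e.apply_symm_apply])

theorem exists_ne (hf : IsTransposition f) : ∃ a, f a ≠ a := by
  obtain ⟨x, y, hxy, hfx, -⟩ := hf
  exact ⟨x, hfx ▸ hxy.symm⟩

theorem sym2_eq (hf : IsTransposition f) {a b : X} (ha : f a ≠ a) (hb : f b ≠ b) :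
    s(a, f a) = s(b, f b) := by
  obtain ⟨x, y, -, hfx, hfy, hfix⟩ := hf
  have moved : ∀ c, f c ≠ c → s(c, f c) = s(x, y) := by
    intro c hc
    by_cases hcx : c = x
    · rw [hcx, hfx]
    by_cases hcy : c = y
    · rw [hcy, hfy, Sym2.eq_swap]
    exact absurd (hfix c hcx hcy) hc
  rw [moved a ha, moved b hb]

end IsTransposition

def orbitGraph {ι X : Type*} (f : ι → X → X) : SimpleGraph X :=
  SimpleGraph.fromRel fun a b => ∃ i, f i a = b

/-- A connected graph on `|ι| + 1` vertices has at least `|ι|` edges, and each transposition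
contributes only one. -/
theorem injective_of_connected_orbitGraph {ι X : Type*} [Finite ι] {f : ι → X → X}
    (hf : ∀ i, IsTransposition (f i)) (hconn : (orbitGraph f).Connected)
    (hcard : Nat.card X = Nat.card ι + 1) : Function.Injective f := by
  intro i j hij
  by_contra hne
  choose m hm using fun k => (hf k).exists_ne
  set edge : ι → Sym2 X := fun k => s(m k, f k (m k))
  have edge_eq : ∀ k a, f k a ≠ a → s(a, f k a) = edge k := fun k a ha => (hf k).sym2_eq ha (hm k)
  have mem : ∀ k a, f k a ≠ a → s(a, f k a) ∈ edge '' {j}ᶜ := by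
    intro k a ha
    by_cases hkj : k = j
    · subst hkj
      exact ⟨i, hne, by rw [← edge_eq i a (hij ▸ ha), hij]⟩
    · exact ⟨k, hkj, (edge_eq k a ha).symm⟩
  have hedges : (orbitGraph f).edgeSet ⊆ edge '' {j}ᶜ := by
    intro e he
    induction e using Sym2.ind with
    | h a b =>
      rw [SimpleGraph.mem_edgeSet, orbitGraph, SimpleGraph.fromRel_adj] at he
      obtain ⟨hab, ⟨k, rfl⟩ | ⟨k, rfl⟩⟩ := he
      · exact mem k a (Ne.symm hab)
      · exact Sym2.eq_swap ▸ mem k b hab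
  have hcompl : ({j}ᶜ : Set ι).ncard + 1 = Nat.card ι := by
    rw [← Set.ncard_add_ncard_compl {j}, Set.ncard_singleton, add_comm]
  refine (calc Nat.card X
      ≤ (orbitGraph f).edgeSet.ncard + 1 := hconn.card_vert_le_card_edgeSet_add_one
    _ ≤ (edge '' {j}ᶜ).ncard + 1 :=
      Nat.add_le_add_right (Set.ncard_le_ncard hedges ((Set.toFinite _).image edge)) 1
    _ ≤ ({j}ᶜ : Set ι).ncard + 1 := Nat.add_le_add_right (Set.ncard_image_le (Set.toFinite _)) 1
    _ < Nat.card ι + 1 := by omega).ne hcard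

section Cosets

variable {G : Type*} [Group G] (K : Subgroup G)

theorem rightMulMap_mk (g x : G) : rightMulMap K g (Quotient.mk'' x) = Quotient.mk'' (x * g) :=
  rfl

theorem rightMulMap_inv_rightMulMap (g : G) (q : Quotient (QuotientGroup.rightRel K)) :
    rightMulMap K g⁻¹ (rightMulMap K g q) = q := by
  induction q using Quotient.inductionOn' with
  | h x => rw [rightMulMap_mk, rightMulMap_mk, mul_inv_cancel_right]

theorem rightMulMap_rightMulMap_inv (g : G) (q : Quotient (QuotientGroup.rightRel K)) :
    rightMulMap K g (rightMulMap K g⁻¹ q) = q := by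
  induction q using Quotient.inductionOn' with
  | h x => rw [rightMulMap_mk, rightMulMap_mk, inv_mul_cancel_right]

def rightMulEquiv (g : G) :
    Quotient (QuotientGroup.rightRel K) ≃ Quotient (QuotientGroup.rightRel K) where
  toFun := rightMulMap K g
  invFun := rightMulMap K g⁻¹
  left_inv := rightMulMap_inv_rightMulMap K g
  right_inv := rightMulMap_rightMulMap_inv K g

theorem IsTransposition.rightMulMap_of_isConj {g h : G} (hgh : IsConj g h)
    (hg : IsTransposition (rightMulMap K g)) : IsTransposition (rightMulMap K h) := by
  obtain ⟨c, rfl⟩ := isConj_iff.mp hgh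
  refine hg.semiconj (rightMulEquiv K c⁻¹) fun q => ?_
  induction q using Quotient.inductionOn' with
  | h x => simp only [rightMulEquiv, Equiv.coe_fn_mk, rightMulMap_mk, mul_assoc, inv_mul_cancel_left]

def cosetMapEquiv (ψ : MulAut G) :
    Quotient (QuotientGroup.rightRel K) ≃ Quotient (QuotientGroup.rightRel (K.map ψ.toMonoidHom)) :=
  Quotient.congr ψ.toEquiv fun a b => by
    rw [QuotientGroup.rightRel_apply, QuotientGroup.rightRel_apply, Subgroup.mem_map_equiv]
    simp

theorem IsTransposition.rightMulMap_map (ψ : MulAut G) {g : G}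
    (hg : IsTransposition (rightMulMap K g)) :
    IsTransposition (rightMulMap (K.map ψ.toMonoidHom) (ψ g)) :=
  hg.semiconj (cosetMapEquiv K ψ) fun q => by
    induction q using Quotient.inductionOn' with
    | h x => exact congrArg Quotient.mk'' (map_mul ψ x g)

end Cosets

namespace FreeGroup

def generatorConjugating (α : Type*) : Submonoid (MulAut (FreeGroup α)) where
  carrier := {ψ | ∀ k, ∃ j, IsConj (of j) (ψ (of k))}
  one_mem' k := ⟨k, .refl _⟩
  mul_mem' {ψ₁ ψ₂} h₁ h₂ k := by
    obtain ⟨j, hj⟩ := h₂ k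
    obtain ⟨i, hi⟩ := h₁ j
    exact ⟨i, hi.trans (ψ₁.toMonoidHom.map_isConj hj)⟩

variable {α : Type*}

theorem inv_mem_generatorConjugating {ψ : MulAut (FreeGroup α)}
    (h : ∀ k, ∃ j, IsConj (ψ (of j)) (of k)) : ψ⁻¹ ∈ generatorConjugating α := by
  intro k
  obtain ⟨j, hj⟩ := h k
  refine ⟨j, ?_⟩
  simpa only [MulEquiv.coe_toMonoidHom, MulAut.inv_apply_self] using (ψ⁻¹).toMonoidHom.map_isConj hj

theorem isTransposition_rightMulMap_map {K : Subgroup (FreeGroup α)} {ψ : MulAut (FreeGroup α)}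
    (hψ : ψ⁻¹ ∈ generatorConjugating α) (hK : ∀ k, IsTransposition (rightMulMap K (of k)))
    (k : α) : IsTransposition (rightMulMap (K.map ψ.toMonoidHom) (of k)) := by
  obtain ⟨j, hj⟩ := hψ k
  have := ((hK j).rightMulMap_of_isConj K hj).rightMulMap_map K ψ
  rwa [MulAut.apply_inv_self] at this

theorem connected_orbitGraph_rightMulMap (K : Subgroup (FreeGroup α)) :
    (orbitGraph fun k => rightMulMap K (of k)).Connected := by
  set Γ := orbitGraph fun k => rightMulMap K (of k)
  have step : ∀ k q, Γ.Reachable q (rightMulMap K (of k) q) := by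
    intro k q
    by_cases hq : rightMulMap K (of k) q = q
    · rw [hq]
    · exact SimpleGraph.Adj.reachable ⟨Ne.symm hq, .inl ⟨k, rfl⟩⟩
  have reach : ∀ g x, Γ.Reachable (Quotient.mk'' x) (Quotient.mk'' (x * g)) := by
    intro g
    induction g using FreeGroup.induction_on with
    | C1 => intro x; rw [mul_one]
    | of k => exact fun x => step k (Quotient.mk'' x)
    | inv_of k _ =>
      intro x
      have := step k (Quotient.mk'' (x * (of k)⁻¹))
      rw [rightMulMap_mk, inv_mul_cancel_right] at this
      exact this.symm
    | mul g h hg hh => exact fun x => (hg x).trans (mul_assoc x g h ▸ hh (x * g))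
  have : Nonempty (Quotient (QuotientGroup.rightRel K)) := ⟨Quotient.mk'' 1⟩
  refine ⟨fun p q => ?_⟩
  induction p using Quotient.inductionOn' with
  | h x =>
    induction q using Quotient.inductionOn' with
    | h y => simpa only [mul_inv_cancel_left] using reach (x⁻¹ * y) x

end FreeGroup

section TreeLike

open FreeGroup

variable {N : ℕ} [NeZero N] {K : Subgroup (FreeGroup (ZMod N))}

theorem isTreeLike_of_isTransposition (hidx : K.index = N + 1)
    (htr : ∀ k : ZMod N, IsTransposition (rightMulMap K (of k))) : IsTreeLike N K := by
  refine ⟨hidx, htr, fun k l hkl heq => hkl ?_⟩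
  have hcard : Nat.card (Quotient (QuotientGroup.rightRel K)) = Nat.card (ZMod N) + 1 := by
    rw [Nat.card_zmod, ← hidx]
    exact Nat.card_congr (QuotientGroup.quotientRightRelEquivQuotientLeftRel K)
  exact injective_of_connected_orbitGraph htr (connected_orbitGraph_rightMulMap K) hcard heq

theorem IsTreeLike.map {ψ : MulAut (FreeGroup (ZMod N))}
    (hψ : ψ⁻¹ ∈ generatorConjugating (ZMod N)) (hK : IsTreeLike N K) :
    IsTreeLike N (K.map ψ.toMonoidHom) :=
  isTreeLike_of_isTransposition ((K.index_map_of_bijective ψ.bijective).trans hK.1)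
    (isTransposition_rightMulMap_map hψ hK.2.1)

end TreeLike

theorem Subgroup.closure_toSubmonoid_le {G : Type*} [Group G] {S : Set G} {M : Submonoid G}
    (h : ∀ a ∈ S, a ∈ M ∧ a⁻¹ ∈ M) : (Subgroup.closure S).toSubmonoid ≤ M := by
  rw [Subgroup.closure_toSubmonoid, Submonoid.closure_le]
  rintro a (ha | ha)
  exacts [(h a ha).1, inv_inv a ▸ (h a⁻¹ ha).2]

section BraidCyclic

open FreeGroup

variable {N : ℕ} {ψ : MulAut (FreeGroup (ZMod N))}

theorem mem_and_inv_mem_generatorConjugating_of_coe_eq_lamHom (hψ : ⇑ψ = ⇑(lamHom N)) :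
    ψ ∈ generatorConjugating (ZMod N) ∧ ψ⁻¹ ∈ generatorConjugating (ZMod N) := by
  have hof : ∀ k, ψ (of k) = of (k + 1) := fun k => by rw [hψ, lamHom, lift_apply_of]
  refine ⟨fun k => ⟨k + 1, by rw [hof]⟩, inv_mem_generatorConjugating fun k => ⟨k - 1, ?_⟩⟩
  rw [hof, sub_add_cancel]

theorem mem_and_inv_mem_generatorConjugating_of_coe_eq_uHom [Nontrivial (ZMod N)] {k : ℕ}
    (hψ : ⇑ψ = ⇑(uHom N k)) :
    ψ ∈ generatorConjugating (ZMod N) ∧ ψ⁻¹ ∈ generatorConjugating (ZMod N) := by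
  set m : ZMod N := (k : ZMod N)
  have hne : m - 1 ≠ m := pred_ne_self m
  have hof : ∀ l, ψ (of l) = if l = m - 1 then of m
      else if l = m then (of m)⁻¹ * of (m - 1) * of m else of l := fun l => by
    rw [hψ, uHom, lift_apply_of]
  refine ⟨fun l => ?_, inv_mem_generatorConjugating fun l => ?_⟩
  · rw [hof]
    split_ifs
    exacts [⟨m, .refl _⟩, ⟨m - 1, isConj_iff.mpr ⟨(of m)⁻¹, by rw [inv_inv]⟩⟩, ⟨l, .refl _⟩]
  · by_cases h1 : l = m - 1
    · refine ⟨m, isConj_iff.mpr ⟨of m, ?_⟩⟩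
      rw [hof, if_neg hne.symm, if_pos rfl, h1]
      group
    by_cases h2 : l = m
    · exact ⟨m - 1, by rw [hof, if_pos rfl, h2]⟩
    · exact ⟨l, by rw [hof, if_neg h1, if_neg h2]⟩

end BraidCyclic

/-- the braid-cyclic group `BC_N` — the subgroup of `Aut(F_N)` generated by
the automorphisms `λ, u_1, …, u_{N-1}` (given as automorphisms `lamA`, `uA k` whose
underlying maps are the endomorphisms `λ` and `u_k`) — preserves tree-like subgroups:
if `H` is a tree-like subgroup of `F_N` and `φ ∈ BC_N` (in particular `φ = λ` or
`φ = u_k^{±1}`), then the image `φ(H)` is again a tree-like subgroup of `F_N`. -/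
theorem stmt_15 (N : ℕ) (hN : 2 ≤ N)
    (lamA : MulAut (FreeGroup (ZMod N))) (hlamA : ⇑lamA = ⇑(lamHom N))
    (uA : ℕ → MulAut (FreeGroup (ZMod N)))
    (huA : ∀ k : ℕ, 1 ≤ k → k ≤ N - 1 → ⇑(uA k) = ⇑(uHom N k))
    (H : Subgroup (FreeGroup (ZMod N))) (hH : IsTreeLike N H)
    (φ : MulAut (FreeGroup (ZMod N)))
    (hφ : φ ∈ Subgroup.closure
      ({lamA} ∪ {a | ∃ k : ℕ, 1 ≤ k ∧ k ≤ N - 1 ∧ a = uA k})) :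
    IsTreeLike N (Subgroup.map φ.toMonoidHom H) := by
  have : Fact (1 < N) := ⟨hN⟩
  have : NeZero N := ⟨by omega⟩
  refine hH.map (Subgroup.closure_toSubmonoid_le ?_ (Subgroup.inv_mem _ hφ))
  rintro a (rfl | ⟨k, hk1, hk2, rfl⟩)
  exacts [mem_and_inv_mem_generatorConjugating_of_coe_eq_lamHom hlamA,
    mem_and_inv_mem_generatorConjugating_of_coe_eq_uHom (huA k hk1 hk2)]
end
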